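/- arXiv:2309.12902 — 3 statements merged into one kernel-verified Lean document; each statement's English description precedes it below -/
import Mathlib

section
/- For a symmetric matrix M and subspace S contained in the column space of M, the M-envelope of S (the intersection of all reducing subspaces of M containing S) exists, is unique, and is itself a reducing subspace of M containing S. -/
open Matrix

/-- The orthogonal projection onto a subspace R of ℝ^q, as an endomorphism. -/
noncomputable def projOn {q : ℕ} (R : Submodule ℝ (EuclideanSpace ℝ (Fin q))) :
    EuclideanSpace ℝ (Fin q) →L[ℝ] EuclideanSpace ℝ (Fin q) :=
  R.subtypeL.comp (R.orthogonalProjectionOnto)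

/-- R reduces M iff M = P_R M P_R + Q_R M Q_R. -/
def Reduces {q : ℕ} (M : EuclideanSpace ℝ (Fin q) →L[ℝ] EuclideanSpace ℝ (Fin q))
    (R : Submodule ℝ (EuclideanSpace ℝ (Fin q))) : Prop :=
  M = (projOn R).comp (M.comp (projOn R)) +
      (ContinuousLinearMap.id ℝ _ - projOn R).comp
        (M.comp (ContinuousLinearMap.id ℝ _ - projOn R))

/-!
A subspace reduces `M` exactly when its orthogonal projection commutes with `M`, and for
self-adjoint `M` this means exactly that the subspace is `M`-invariant. Invariant subspaces are
closed under arbitrary intersections, so the intersection of all reducing subspaces containing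
`S` is itself one of them, hence the least one, and a least element is unique.
-/

theorem IsIdempotentElem.pinch_eq_self_iff_commute {A : Type*} [Ring A] {p : A}
    (hp : IsIdempotentElem p) (a : A) :
    p * a * p + (1 - p) * a * (1 - p) = a ↔ Commute p a := by
  have hpp : p * p = p := hp
  have pinch : p * a * p + (1 - p) * a * (1 - p) - a =
      (p * a * p - p * a) + (p * a * p - a * p) := by noncomm_ring
  have hl : p * ((p * a * p - p * a) + (p * a * p - a * p)) = p * a * p - p * a := by
    simp only [mul_add, mul_sub, ← mul_assoc, hpp]; abel
  have hr : ((p * a * p - p * a) + (p * a * p - a * p)) * p = p * a * p - a * p := by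
    simp only [add_mul, sub_mul, mul_assoc, hpp]; abel
  rw [← sub_eq_zero, pinch]
  constructor
  · intro h
    rw [h, mul_zero, eq_comm, sub_eq_zero] at hl
    rw [h, zero_mul, eq_comm, sub_eq_zero] at hr
    exact hl.symm.trans hr
  · intro h
    have hpa : p * a * p = p * a := by rw [mul_assoc, ← h.eq, ← mul_assoc, hpp]
    rw [hpa, ← h.eq, sub_self, add_zero]

theorem Module.End.sInf_mem_invtSubmodule {R M : Type*} [Semiring R] [AddCommMonoid M]
    [Module R M] {f : Module.End R M} {s : Set (Submodule R M)}
    (hs : s ⊆ f.invtSubmodule) : sInf s ∈ f.invtSubmodule := by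
  rw [Module.End.mem_invtSubmodule_iff_forall_mem_of_mem]
  intro x hx
  rw [Submodule.mem_sInf] at hx ⊢
  exact fun p hp => hs hp (hx p hp)

theorem commute_starProjection_iff_mem_invtSubmodule {𝕜 E : Type*} [RCLike 𝕜]
    [NormedAddCommGroup E] [InnerProductSpace 𝕜 E] [CompleteSpace E] {T : E →L[𝕜] E}
    (hT : IsSelfAdjoint T) (U : Submodule 𝕜 E) [U.HasOrthogonalProjection] :
    Commute U.starProjection T ↔ U ∈ Module.End.invtSubmodule (T : E →ₗ[𝕜] E) := by
  rw [ContinuousLinearMap.IsIdempotentElem.commute_iff U.isIdempotentElem_starProjection,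
    Submodule.range_starProjection, Submodule.ker_starProjection,
    ← ContinuousLinearMap.mem_invtSubmodule_adjoint_iff,
    ← ContinuousLinearMap.star_eq_adjoint, hT.star_eq, and_self]

section Reduces

variable {q : ℕ} {M : EuclideanSpace ℝ (Fin q) →L[ℝ] EuclideanSpace ℝ (Fin q)}

theorem projOn_eq_starProjection (R : Submodule ℝ (EuclideanSpace ℝ (Fin q))) :
    projOn R = R.starProjection :=
  rfl

theorem reduces_iff_commute (R : Submodule ℝ (EuclideanSpace ℝ (Fin q))) :
    Reduces M R ↔ Commute R.starProjection M := by
  rw [Reduces, projOn_eq_starProjection, eq_comm,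
    ← R.isIdempotentElem_starProjection.pinch_eq_self_iff_commute]
  rfl

theorem reduces_iff_mem_invtSubmodule (hM : IsSelfAdjoint M)
    (R : Submodule ℝ (EuclideanSpace ℝ (Fin q))) :
    Reduces M R ↔ R ∈ Module.End.invtSubmodule (M : EuclideanSpace ℝ (Fin q) →ₗ[ℝ] _) :=
  (reduces_iff_commute R).trans (commute_starProjection_iff_mem_invtSubmodule hM R)

theorem reduces_sInf (hM : IsSelfAdjoint M) {s : Set (Submodule ℝ (EuclideanSpace ℝ (Fin q)))}
    (hs : ∀ R ∈ s, Reduces M R) : Reduces M (sInf s) :=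
  (reduces_iff_mem_invtSubmodule hM _).2 <| Module.End.sInf_mem_invtSubmodule fun R hR =>
    (reduces_iff_mem_invtSubmodule hM R).1 (hs R hR)

theorem isLeast_sInf_reduces_ge (hM : IsSelfAdjoint M)
    (S : Submodule ℝ (EuclideanSpace ℝ (Fin q))) :
    IsLeast {R | Reduces M R ∧ S ≤ R} (sInf {R | Reduces M R ∧ S ≤ R}) :=
  ⟨⟨reduces_sInf hM fun _ hR => hR.1, le_sInf fun _ hR => hR.2⟩, fun _ hR => sInf_le hR⟩

end Reduces

theorem stmt_4_general {q : ℕ} (M : EuclideanSpace ℝ (Fin q) →L[ℝ] EuclideanSpace ℝ (Fin q))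
    (hM : IsSelfAdjoint M)
    (S : Submodule ℝ (EuclideanSpace ℝ (Fin q))) :
    Reduces M (sInf {R | Reduces M R ∧ S ≤ R}) ∧
    S ≤ sInf {R | Reduces M R ∧ S ≤ R} ∧
    (∃! E : Submodule ℝ (EuclideanSpace ℝ (Fin q)),
      Reduces M E ∧ S ≤ E ∧ ∀ R, Reduces M R → S ≤ R → E ≤ R) := by
  have hleast := isLeast_sInf_reduces_ge hM S
  refine ⟨hleast.1.1, hleast.1.2, _,
    ⟨hleast.1.1, hleast.1.2, fun R hR hSR => hleast.2 ⟨hR, hSR⟩⟩, ?_⟩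
  rintro E ⟨hE, hSE, hEmin⟩
  exact (hleast.unique ⟨⟨hE, hSE⟩, fun R hR => hEmin R hR.1 hR.2⟩).symm

/-- For symmetric M and a subspace S contained in the column space (range) of
M, the M-envelope of S -- the intersection of all reducing subspaces of M
containing S -- exists, is unique, and is itself a reducing subspace of M
containing S. -/
theorem stmt_4 {q : ℕ} (M : EuclideanSpace ℝ (Fin q) →L[ℝ] EuclideanSpace ℝ (Fin q))
    (hM : IsSelfAdjoint M)
    (S : Submodule ℝ (EuclideanSpace ℝ (Fin q)))
    (hS : S ≤ LinearMap.range (M : EuclideanSpace ℝ (Fin q) →ₗ[ℝ] EuclideanSpace ℝ (Fin q))) :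
    Reduces M (sInf {R | Reduces M R ∧ S ≤ R}) ∧
    S ≤ sInf {R | Reduces M R ∧ S ≤ R} ∧
    (∃! E : Submodule ℝ (EuclideanSpace ℝ (Fin q)),
      Reduces M E ∧ S ≤ E ∧ ∀ R, Reduces M R → S ≤ R → E ≤ R) :=
  stmt_4_general M hM S
end

section
/- For a positive definite matrix J and matrices H, R with span(J^{1/2} R) ⊆ span(J^{1/2} H), the difference H(H'JH)^† H' − R(R'JR)^† R' equals J^{-1/2}(P_{J^{1/2}H} − P_{J^{1/2}R})J^{-1/2} and is positive semidefinite, where P_A denotes the orthogonal projection onto the column space of A and † the Moore–Penrose inverse. -/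
/-!
Write `S = J^{1/2}`, so that `(S A)ᵀ (S A) = Aᵀ J A`. For any generalized inverse `G` of `Bᴴ B`
one has `B G Bᴴ B = B`, because `Bᴴ B (G Bᴴ B - 1) = 0` forces `B (G Bᴴ B - 1) = 0`; hence
`B G Bᴴ` is idempotent and self-adjoint, i.e. the orthogonal projection onto the column space
of `B`. Applied to `B = S H` and `B = S R` this makes `P = S H G_h Hᵀ S` and
`Q = S R G_r Rᵀ S` star projections, and the span inclusion gives `P Q = Q`, so `Q ≤ P`.
Finally `H G_h Hᵀ - R G_r Rᵀ = S⁻¹ (P - Q) S⁻¹` is a congruence of the positive semidefinite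
matrix `P - Q`.
-/

open Matrix

/-- G is the Moore–Penrose inverse of A (the four Penrose conditions). -/
def IsMoorePenrose {m n : ℕ} (A : Matrix (Fin m) (Fin n) ℝ)
    (G : Matrix (Fin n) (Fin m) ℝ) : Prop :=
  A * G * A = A ∧ G * A * G = G ∧ (A * G)ᵀ = A * G ∧ (G * A)ᵀ = G * A

open scoped ComplexOrder in
/-- The square root of a positive semidefinite matrix, as defined in the older Mathlib
(removed since). -/
noncomputable def Matrix.PosSemidef.sqrt {n : Type*} {𝕜 : Type*} [Fintype n] [RCLike 𝕜]
    [DecidableEq n] {A : Matrix n n 𝕜} (hA : A.PosSemidef) : Matrix n n 𝕜 :=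
  hA.1.eigenvectorUnitary.1 * diagonal ((↑) ∘ (Real.sqrt ∘ hA.1.eigenvalues)) *
  (star hA.1.eigenvectorUnitary : Matrix n n 𝕜)

open scoped MatrixOrder ComplexOrder

namespace Matrix

section Sqrt

variable {n 𝕜 : Type*} [Fintype n] [DecidableEq n] [RCLike 𝕜]

lemma PosSemidef.sqrt_eq_cfcSqrt {A : Matrix n n 𝕜} (hA : A.PosSemidef) :
    hA.sqrt = CFC.sqrt A := by
  rw [CFC.sqrt_eq_real_sqrt A hA.nonneg, cfcₙ_eq_cfc, hA.1.cfc_eq]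
  rfl

lemma PosSemidef.sqrt_mul_self {A : Matrix n n 𝕜} (hA : A.PosSemidef) :
    hA.sqrt * hA.sqrt = A := by
  rw [hA.sqrt_eq_cfcSqrt, CFC.sqrt_mul_sqrt_self A hA.nonneg]

lemma PosSemidef.posSemidef_sqrt {A : Matrix n n 𝕜} (hA : A.PosSemidef) :
    hA.sqrt.PosSemidef := by
  rw [hA.sqrt_eq_cfcSqrt, ← nonneg_iff_posSemidef]
  exact CFC.sqrt_nonneg A

lemma PosDef.isUnit_det_sqrt {A : Matrix n n 𝕜} (hA : A.PosDef) :
    IsUnit hA.posSemidef.sqrt.det := by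
  have : IsUnit (hA.posSemidef.sqrt.det * hA.posSemidef.sqrt.det) := by
    rw [← det_mul, hA.posSemidef.sqrt_mul_self]
    exact hA.isUnit.map detMonoidHom
  exact isUnit_of_mul_isUnit_left this

end Sqrt

section Projection

variable {l m n 𝕜 : Type*} [Fintype m] [Fintype n] [RCLike 𝕜]

lemma mul_mul_conjTranspose_mul_eq_self {A : Matrix m n 𝕜} {G : Matrix n n 𝕜}
    (hG : Aᴴ * A * G * (Aᴴ * A) = Aᴴ * A) : A * G * Aᴴ * A = A := by
  classical
  have h := (conjTranspose_mul_self_mul_eq_zero A (G * (Aᴴ * A) - 1)).mp <| by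
    rw [Matrix.mul_sub, ← Matrix.mul_assoc, hG, Matrix.mul_one, sub_self]
  rw [Matrix.mul_sub, Matrix.mul_one, sub_eq_zero] at h
  simpa only [Matrix.mul_assoc] using h

lemma isStarProjection_mul_mul_conjTranspose {A : Matrix m n 𝕜} {G : Matrix n n 𝕜}
    (hG : Aᴴ * A * G * (Aᴴ * A) = Aᴴ * A) : IsStarProjection (A * G * Aᴴ) := by
  have hPA : A * G * Aᴴ * A = A := mul_mul_conjTranspose_mul_eq_self hG
  have hPA' : (A * G * Aᴴ)ᴴ * A = A := by
    have hG' : Aᴴ * A * Gᴴ * (Aᴴ * A) = Aᴴ * A := by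
      simpa only [conjTranspose_mul, conjTranspose_conjTranspose, Matrix.mul_assoc] using
        congrArg conjTranspose hG
    simpa only [conjTranspose_mul, conjTranspose_conjTranspose, Matrix.mul_assoc] using mul_mul_conjTranspose_mul_eq_self hG'
  have hP'P : (A * G * Aᴴ)ᴴ * (A * G * Aᴴ) = A * G * Aᴴ := by
    simp only [← Matrix.mul_assoc, hPA']
  refine ⟨?_, ?_⟩
  · change _ * _ = _
    simp only [← Matrix.mul_assoc, hPA]
  · change (A * G * Aᴴ)ᴴ = _
    rw [← hP'P, conjTranspose_mul, conjTranspose_conjTranspose, hP'P]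

lemma mul_eq_self_of_range_le [Fintype l] {P : Matrix m m 𝕜} {A : Matrix m n 𝕜}
    {B : Matrix m l 𝕜} (hBA : LinearMap.range B.mulVecLin ≤ LinearMap.range A.mulVecLin)
    (hPA : P * A = A) : P * B = B := by
  refine ext_iff_mulVec.mpr fun v ↦ ?_
  obtain ⟨w, hw⟩ := hBA ⟨v, rfl⟩
  simp only [mulVecLin_apply] at hw
  rw [← mulVec_mulVec, ← hw, mulVec_mulVec, hPA]

end Projection

lemma nonsing_inv_mul_mul_mul_nonsing_inv {n α : Type*} [Fintype n] [DecidableEq n] [CommRing α]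
    {S : Matrix n n α} (X : Matrix n n α) (hS : IsUnit S.det) : S⁻¹ * (S * X * S) * S⁻¹ = X := by
  rw [← Matrix.mul_assoc, ← Matrix.mul_assoc, nonsing_inv_mul S hS, Matrix.one_mul,
    mul_nonsing_inv_cancel_right S X hS]

namespace PosSemidef

variable {ι κ : Type*} [Fintype ι] [DecidableEq ι] {J : Matrix ι ι ℝ}

lemma transpose_sqrt (hJ : J.PosSemidef) : hJ.sqrtᵀ = hJ.sqrt := by
  simpa using hJ.posSemidef_sqrt.isHermitian.eq

lemma conjTranspose_sqrt_mul (hJ : J.PosSemidef) (H : Matrix ι κ ℝ) :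
    (hJ.sqrt * H)ᴴ = Hᵀ * hJ.sqrt := by
  simp [hJ.transpose_sqrt]

lemma conjTranspose_sqrt_mul_mul_sqrt_mul (hJ : J.PosSemidef) (H : Matrix ι κ ℝ) :
    (hJ.sqrt * H)ᴴ * (hJ.sqrt * H) = Hᵀ * J * H := by
  rw [conjTranspose_sqrt_mul, Matrix.mul_assoc, ← Matrix.mul_assoc hJ.sqrt, hJ.sqrt_mul_self,
    Matrix.mul_assoc]

variable [Fintype κ]

lemma sqrt_mul_mul_mul_sqrt_mul_sqrt_mul (hJ : J.PosSemidef) {H : Matrix ι κ ℝ}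
    {G : Matrix κ κ ℝ} (hG : Hᵀ * J * H * G * (Hᵀ * J * H) = Hᵀ * J * H) :
    hJ.sqrt * H * G * Hᵀ * hJ.sqrt * (hJ.sqrt * H) = hJ.sqrt * H := by
  have h := mul_mul_conjTranspose_mul_eq_self (A := hJ.sqrt * H) (G := G)
    (by rwa [conjTranspose_sqrt_mul_mul_sqrt_mul])
  simpa only [conjTranspose_sqrt_mul, Matrix.mul_assoc] using h

lemma isStarProjection_sqrt_mul_mul_mul_sqrt (hJ : J.PosSemidef) {H : Matrix ι κ ℝ}
    {G : Matrix κ κ ℝ} (hG : Hᵀ * J * H * G * (Hᵀ * J * H) = Hᵀ * J * H) :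
    IsStarProjection (hJ.sqrt * H * G * Hᵀ * hJ.sqrt) := by
  have h := isStarProjection_mul_mul_conjTranspose (A := hJ.sqrt * H) (G := G)
    (by rwa [conjTranspose_sqrt_mul_mul_sqrt_mul])
  simpa only [conjTranspose_sqrt_mul, Matrix.mul_assoc] using h

end PosSemidef

end Matrix

/-- For positive definite J and matrices H, R with span(J^{1/2}R) ⊆
span(J^{1/2}H), the difference H(H'JH)⁺H' − R(R'JR)⁺R' equals
J^{-1/2}(P_{J^{1/2}H} − P_{J^{1/2}R})J^{-1/2} (where for a matrix A,
P_A = A(A'A)⁺A' is the orthogonal projection onto span(A), so that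
P_{J^{1/2}H} = J^{1/2}H(H'JH)⁺H'J^{1/2}) and is positive semidefinite. -/
theorem stmt_11 {n k m : ℕ} (J : Matrix (Fin n) (Fin n) ℝ) (hJ : J.PosDef)
    (H : Matrix (Fin n) (Fin k) ℝ) (R : Matrix (Fin n) (Fin m) ℝ)
    (Gh : Matrix (Fin k) (Fin k) ℝ) (Gr : Matrix (Fin m) (Fin m) ℝ)
    (hGh : IsMoorePenrose (Hᵀ * J * H) Gh) (hGr : IsMoorePenrose (Rᵀ * J * R) Gr)
    (hspan :
      LinearMap.range (hJ.posSemidef.sqrt * R).mulVecLin ≤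
        LinearMap.range (hJ.posSemidef.sqrt * H).mulVecLin) :
    H * Gh * Hᵀ - R * Gr * Rᵀ =
      (hJ.posSemidef.sqrt)⁻¹ *
        (hJ.posSemidef.sqrt * H * Gh * Hᵀ * hJ.posSemidef.sqrt -
         hJ.posSemidef.sqrt * R * Gr * Rᵀ * hJ.posSemidef.sqrt) *
        (hJ.posSemidef.sqrt)⁻¹ ∧
    (H * Gh * Hᵀ - R * Gr * Rᵀ).PosSemidef := by
  set S := hJ.posSemidef.sqrt
  have hS : IsUnit S.det := hJ.isUnit_det_sqrt
  have hSt : Sᵀ = S := hJ.posSemidef.transpose_sqrt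
  have hPQ : S * H * Gh * Hᵀ * S * (S * R * Gr * Rᵀ * S) = S * R * Gr * Rᵀ * S := by
    have hPR := mul_eq_self_of_range_le hspan
      (hJ.posSemidef.sqrt_mul_mul_mul_sqrt_mul_sqrt_mul hGh.1)
    simp only [← Matrix.mul_assoc] at hPR ⊢
    rw [hPR]
  have hle : (S * H * Gh * Hᵀ * S - S * R * Gr * Rᵀ * S).PosSemidef :=
    (hJ.posSemidef.isStarProjection_sqrt_mul_mul_mul_sqrt hGr.1).le_of_mul_eq_right
      (hJ.posSemidef.isStarProjection_sqrt_mul_mul_mul_sqrt hGh.1) hPQ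
  have hconj : H * Gh * Hᵀ - R * Gr * Rᵀ =
      S⁻¹ * (S * H * Gh * Hᵀ * S - S * R * Gr * Rᵀ * S) * S⁻¹ := by
    rw [← nonsing_inv_mul_mul_mul_nonsing_inv (H * Gh * Hᵀ - R * Gr * Rᵀ) hS]
    simp only [Matrix.mul_sub, Matrix.sub_mul, Matrix.mul_assoc]
  refine ⟨hconj, hconj ▸ ?_⟩
  simpa only [conjTranspose_eq_transpose_of_trivial, transpose_nonsing_inv, hSt] using
    hle.mul_mul_conjTranspose_same S⁻¹
end

section
/- For Γ symmetric positive definite of size n and B ∈ R^{d×n} of full row rank with projection P_{B'(Γ)} = B'(BΓB')^{-1}BΓ, the Kronecker products (Q_{B'(Γ)} Γ^{-1}) ⊗ (P_{A(Σ^{-1})} Σ) and (P_{B'(Γ)} Γ^{-1}) ⊗ Σ are both positive semidefinite, where Σ is positive definite, A ∈ R^{q×d} is full column rank, P_{A(Σ^{-1})} = A(A'Σ^{-1}A)^{-1}A'Σ^{-1}, and Q_{B'(Γ)} = I − P_{B'(Γ)}. -/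
/-!
Write `P = X (XᴴVX)⁻¹XᴴV` for the projection onto the columns of `X` that is orthogonal for the
inner product given by `V`. Then `PV⁻¹ = X (XᴴVX)⁻¹Xᴴ` is positive semidefinite, and since `P` is
idempotent with `PV⁻¹` Hermitian, also `(1 - P)V⁻¹ = (1 - P) V⁻¹ (1 - P)ᴴ` is positive semidefinite.
Both Kronecker products are then products of positive semidefinite factors.
-/

open Matrix
open scoped Kronecker ComplexOrder

namespace Matrix

theorem mulVec_injective_of_rank_eq_card {K m n : Type*} [Field K] [Fintype n]
    (A : Matrix m n K) (hA : A.rank = Fintype.card n) : Function.Injective A.mulVec := by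
  have hker : Module.finrank K (LinearMap.ker A.mulVecLin) = 0 := by
    have := LinearMap.finrank_range_add_finrank_ker A.mulVecLin
    rw [← rank, hA, Module.finrank_fintype_fun_eq_card] at this
    omega
  rw [← coe_mulVecLin, ← LinearMap.ker_eq_bot]
  exact Submodule.finrank_eq_zero.mp hker

variable {𝕜 m k : Type*} [RCLike 𝕜] [Fintype m] [Fintype k] [DecidableEq k]

theorem PosSemidef.mul_of_isIdempotentElem {M P : Matrix m m 𝕜} (hM : M.PosSemidef)
    (hP : IsIdempotentElem P) (hPM : (P * M).IsHermitian) : (P * M).PosSemidef := by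
  have hMP : M * Pᴴ = P * M := by
    rw [← hM.isHermitian.eq, ← conjTranspose_mul, hPM.eq, hM.isHermitian.eq]
  have : P * M * Pᴴ = P * M := by
    rw [Matrix.mul_assoc, hMP, ← Matrix.mul_assoc, hP.eq]
  exact this ▸ hM.mul_mul_conjTranspose_same P

/-- The projection `P_{X(V)}` onto the column span of `X`, orthogonal for the inner product
`⟨u, w⟩ = uᴴ V w`. -/
noncomputable def weightedProj (X : Matrix m k 𝕜) (V : Matrix m m 𝕜) : Matrix m m 𝕜 :=
  X * (Xᴴ * V * X)⁻¹ * Xᴴ * V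

theorem isIdempotentElem_weightedProj {X : Matrix m k 𝕜} {V : Matrix m m 𝕜}
    (h : IsUnit (Xᴴ * V * X).det) : IsIdempotentElem (weightedProj X V) := by
  have hG : (Xᴴ * V * X)⁻¹ * (Xᴴ * V * X) = 1 := nonsing_inv_mul _ h
  calc weightedProj X V * weightedProj X V
      = X * ((Xᴴ * V * X)⁻¹ * (Xᴴ * V * X)) * (Xᴴ * V * X)⁻¹ * Xᴴ * V := by
        simp only [weightedProj, Matrix.mul_assoc]
    _ = weightedProj X V := by rw [hG, Matrix.mul_one, weightedProj]

variable [DecidableEq m]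

theorem weightedProj_mul_inv (X : Matrix m k 𝕜) {V : Matrix m m 𝕜} (hV : IsUnit V.det) :
    weightedProj X V * V⁻¹ = X * (Xᴴ * V * X)⁻¹ * Xᴴ := by
  rw [weightedProj, Matrix.mul_assoc _ V, mul_nonsing_inv V hV, Matrix.mul_one]

variable {X : Matrix m k 𝕜} {V : Matrix m m 𝕜}

theorem posSemidef_weightedProj_mul_inv (hV : V.PosDef) (hX : Function.Injective X.mulVec) :
    (weightedProj X V * V⁻¹).PosSemidef := by
  rw [weightedProj_mul_inv X ((isUnit_iff_isUnit_det V).mp hV.isUnit)]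
  exact (hV.conjTranspose_mul_mul_same hX).inv.posSemidef.mul_mul_conjTranspose_same X

theorem posSemidef_one_sub_weightedProj_mul_inv (hV : V.PosDef)
    (hX : Function.Injective X.mulVec) : ((1 - weightedProj X V) * V⁻¹).PosSemidef := by
  have hP := isIdempotentElem_weightedProj
    ((isUnit_iff_isUnit_det _).mp (hV.conjTranspose_mul_mul_same hX).isUnit)
  refine hV.inv.posSemidef.mul_of_isIdempotentElem hP.one_sub ?_
  rw [Matrix.sub_mul, Matrix.one_mul]
  exact hV.inv.isHermitian.sub (posSemidef_weightedProj_mul_inv hV hX).isHermitian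

end Matrix

/-- For Γ symmetric positive definite of size n and B of full row rank with
P_{B'(Γ)} = B'(BΓB')⁻¹BΓ, the Kronecker products
(Q_{B'(Γ)} Γ⁻¹) ⊗ (P_{A(Σ⁻¹)} Σ) and (P_{B'(Γ)} Γ⁻¹) ⊗ Σ are both positive
semidefinite, where Σ is positive definite, A has full column rank,
P_{A(Σ⁻¹)} = A(A'Σ⁻¹A)⁻¹A'Σ⁻¹, and Q_{B'(Γ)} = I − P_{B'(Γ)}. -/
theorem stmt_14 {n q d : ℕ}
    (Γ : Matrix (Fin n) (Fin n) ℝ) (hΓ : Γ.PosDef)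
    (Sig : Matrix (Fin q) (Fin q) ℝ) (hSig : Sig.PosDef)
    (A : Matrix (Fin q) (Fin d) ℝ) (hA : A.rank = d)
    (B : Matrix (Fin d) (Fin n) ℝ) (hB : B.rank = d) :
    (((1 - Bᵀ * (B * Γ * Bᵀ)⁻¹ * B * Γ) * Γ⁻¹) ⊗ₖ
      ((A * (Aᵀ * Sig⁻¹ * A)⁻¹ * Aᵀ * Sig⁻¹) * Sig)).PosSemidef ∧
    (((Bᵀ * (B * Γ * Bᵀ)⁻¹ * B * Γ) * Γ⁻¹) ⊗ₖ Sig).PosSemidef := by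
  have hPB : Bᵀ * (B * Γ * Bᵀ)⁻¹ * B * Γ = weightedProj Bᴴ Γ := by
    simp only [weightedProj, conjTranspose_eq_transpose_of_trivial, transpose_transpose]
  have hPA : A * (Aᵀ * Sig⁻¹ * A)⁻¹ * Aᵀ * Sig⁻¹ * Sig = weightedProj A Sig⁻¹ * Sig⁻¹⁻¹ := by
    rw [nonsing_inv_nonsing_inv Sig ((isUnit_iff_isUnit_det Sig).mp hSig.isUnit), weightedProj,
      conjTranspose_eq_transpose_of_trivial]
  have hBinj : Function.Injective Bᴴ.mulVec := by
    refine mulVec_injective_of_rank_eq_card _ ?_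
    rw [conjTranspose_eq_transpose_of_trivial, rank_transpose, hB, Fintype.card_fin]
  have hAinj : Function.Injective A.mulVec :=
    mulVec_injective_of_rank_eq_card A (by rw [hA, Fintype.card_fin])
  rw [hPB, hPA]
  exact ⟨(posSemidef_one_sub_weightedProj_mul_inv hΓ hBinj).kronecker
      (posSemidef_weightedProj_mul_inv hSig.inv hAinj),
    (posSemidef_weightedProj_mul_inv hΓ hBinj).kronecker hSig.posSemidef⟩
end
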